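/- Under the hypotheses of the previous bound, and additionally with E := sup_{x∈ℝⁿ, |ω|=1} |d_ξ p(x,ω)| < ∞, every maximal solution (x(t), ξ(t)) of the Hamilton equations with initial condition in ℝⁿ × (ℝⁿ∖{0}) exists for all t ∈ ℝ: on any bounded time interval the trajectory remains in a compact subset of ℝⁿ × (ℝⁿ∖{0}), hence the solution extends globally. -/

import Mathlib

open MeasureTheory

section helpers
open Set Real Manifold

variable {G : Type*} [NormedAddCommGroup G] [NormedSpace ℝ G]

/-- Grönwall forward. -/
lemma stmt4_gron_fwd {f df : ℝ → G} {K ε δ a b : ℝ}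
    (h : ∀ t ∈ Icc a b, HasDerivAt f (df t) t)
    (hb : ∀ t ∈ Icc a b, ‖df t‖ ≤ K * ‖f t‖ + ε) (ha : ‖f a‖ ≤ δ) :
    ∀ t ∈ Icc a b, ‖f t‖ ≤ gronwallBound δ K ε (t - a) := by
  apply norm_le_gronwallBound_of_norm_deriv_right_le
  · exact fun t ht => (h t ht).continuousAt.continuousWithinAt
  · exact fun t ht => ((h t (Ico_subset_Icc_self ht)).hasDerivWithinAt)
  · exact ha
  · exact fun t ht => hb t (Ico_subset_Icc_self ht)

/-- Grönwall backward (from the right endpoint). -/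
lemma stmt4_gron_bwd {f df : ℝ → G} {K ε δ a b : ℝ}
    (h : ∀ t ∈ Icc a b, HasDerivAt f (df t) t)
    (hb : ∀ t ∈ Icc a b, ‖df t‖ ≤ K * ‖f t‖ + ε) (hbnd : ‖f b‖ ≤ δ) :
    ∀ t ∈ Icc a b, ‖f t‖ ≤ gronwallBound δ K ε (b - t) := by
  rcases le_or_gt a b with hab | hab
  · set g : ℝ → G := fun s => f (a + b - s) with hg
    have hmem : ∀ s ∈ Icc a b, a + b - s ∈ Icc a b := by
      intro s hs
      simp only [mem_Icc] at hs ⊢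
      constructor <;> linarith [hs.1, hs.2]
    have hg' : ∀ s ∈ Icc a b, HasDerivAt g (-df (a + b - s)) s := by
      intro s hs
      have h1 : HasDerivAt (fun s : ℝ => a + b - s) (-1) s := by
        simpa using (hasDerivAt_id s).const_sub (a + b)
      have := (h _ (hmem s hs)).scomp s h1
      simpa [Function.comp_def, hg] using this
    have hgb : ∀ s ∈ Icc a b, ‖-df (a + b - s)‖ ≤ K * ‖g s‖ + ε := by
      intro s hs; rw [norm_neg]; exact hb _ (hmem s hs)
    have hga : ‖g a‖ ≤ δ := by simpa [hg] using hbnd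
    intro t ht
    have := stmt4_gron_fwd hg' hgb hga (a + b - t) (hmem t ht)
    simpa [hg, show a + b - (a + b - t) = t by ring, show a + b - t - a = b - t by ring] using this
  · intro t ht; exact absurd (ht.1.trans ht.2) (not_le.2 hab)

/-- Two-sided exponential bound. -/
lemma stmt4_gron_two_sided {f df : ℝ → G} {D : ℝ} {t : ℝ}
    (h : ∀ s ∈ Icc (-|t|) |t|, HasDerivAt f (df s) s)
    (hb : ∀ s ∈ Icc (-|t|) |t|, ‖df s‖ ≤ D * ‖f s‖) :
    ‖f 0‖ * exp (-(D * |t|)) ≤ ‖f t‖ ∧ ‖f t‖ ≤ ‖f 0‖ * exp (D * |t|) := by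
  have hb' : ∀ s ∈ Icc (-|t|) |t|, ‖df s‖ ≤ D * ‖f s‖ + 0 := by
    intro s hs; simpa using hb s hs
  have key : ∀ a b : ℝ, Icc a b ⊆ Icc (-|t|) |t| →
      (∀ s ∈ Icc a b, ‖f s‖ ≤ ‖f a‖ * exp (D * (s - a)) ∧ ‖f s‖ ≤ ‖f b‖ * exp (D * (b - s))) := by
    intro a b hsub s hs
    constructor
    · have := stmt4_gron_fwd (fun u hu => h u (hsub hu)) (fun u hu => hb' u (hsub hu)) le_rfl s hs
      rwa [gronwallBound_ε0] at this
    · have := stmt4_gron_bwd (fun u hu => h u (hsub hu)) (fun u hu => hb' u (hsub hu)) le_rfl s hs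
      rwa [gronwallBound_ε0] at this
  rcases le_or_gt 0 t with ht | ht
  · have hsub : Icc (0:ℝ) t ⊆ Icc (-|t|) |t| := by
      apply Icc_subset_Icc <;> simp [abs_of_nonneg ht] <;> positivity
    have h1 := (key 0 t hsub t ⟨ht, le_rfl⟩).1
    have h2 := (key 0 t hsub 0 ⟨le_rfl, ht⟩).2
    rw [abs_of_nonneg ht]
    refine ⟨?_, by simpa using h1⟩
    rw [sub_zero] at h2
    calc ‖f 0‖ * exp (-(D * t)) ≤ (‖f t‖ * exp (D * t)) * exp (-(D * t)) := by
          apply mul_le_mul_of_nonneg_right h2 (exp_nonneg _)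
      _ = ‖f t‖ := by rw [mul_assoc, ← exp_add]; simp
  · have hsub : Icc t (0:ℝ) ⊆ Icc (-|t|) |t| := by
      apply Icc_subset_Icc
      · simp [abs_of_neg ht]
      · simp [abs_of_neg ht]; linarith
    have h1 := (key t 0 hsub t ⟨le_rfl, ht.le⟩).2
    have h2 := (key t 0 hsub 0 ⟨ht.le, le_rfl⟩).1
    rw [abs_of_neg ht]
    constructor
    · calc ‖f 0‖ * exp (-(D * -t)) ≤ (‖f t‖ * exp (D * (0 - t))) * exp (-(D * -t)) := by
            apply mul_le_mul_of_nonneg_right h2 (exp_nonneg _)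
        _ = ‖f t‖ := by rw [mul_assoc, ← exp_add]; ring_nf; simp
    · simpa using h1

/-- Linear displacement bound. -/
lemma stmt4_gron_lin {f df : ℝ → G} {E : ℝ} {t : ℝ}
    (h : ∀ s ∈ Icc (-|t|) |t|, HasDerivAt f (df s) s)
    (hb : ∀ s ∈ Icc (-|t|) |t|, ‖df s‖ ≤ E) :
    ‖f t - f 0‖ ≤ E * |t| := by
  set g : ℝ → G := fun s => f s - f 0 with hg
  have hg' : ∀ s ∈ Icc (-|t|) |t|, HasDerivAt g (df s) s := fun s hs => (h s hs).sub_const _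
  have hb' : ∀ s ∈ Icc (-|t|) |t|, ‖df s‖ ≤ 0 * ‖g s‖ + E := by
    intro s hs; simpa using hb s hs
  rcases le_or_gt 0 t with ht | ht
  · have hsub : Icc (0:ℝ) t ⊆ Icc (-|t|) |t| := by
      apply Icc_subset_Icc <;> simp [abs_of_nonneg ht] <;> positivity
    have := stmt4_gron_fwd (δ := 0) (fun u hu => hg' u (hsub hu)) (fun u hu => hb' u (hsub hu))
      (by simp [hg]) t ⟨ht, le_rfl⟩
    simpa [hg, gronwallBound_K0, abs_of_nonneg ht] using this
  · have hsub : Icc t (0:ℝ) ⊆ Icc (-|t|) |t| := by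
      apply Icc_subset_Icc
      · simp [abs_of_neg ht]
      · simp [abs_of_neg ht]; linarith
    have := stmt4_gron_bwd (δ := 0) (fun u hu => hg' u (hsub hu)) (fun u hu => hb' u (hsub hu))
      (by simp [hg]) t ⟨le_rfl, ht.le⟩
    simpa [hg, gronwallBound_K0, abs_of_neg ht] using this

/-- Smooth cutoff: 1 on a compact set, compactly supported inside an open set. -/
lemma stmt4_exists_cutoff {F : Type*} [NormedAddCommGroup F] [NormedSpace ℝ F]
    [FiniteDimensional ℝ F] {A Ω : Set F} (hA : IsCompact A) (hΩ : IsOpen Ω) (hAΩ : A ⊆ Ω) :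
    ∃ χ : F → ℝ, ContDiff ℝ ((⊤:ℕ∞) : WithTop ℕ∞) χ ∧ (∀ q, χ q ∈ Icc (0:ℝ) 1) ∧ EqOn χ 1 A ∧
      tsupport χ ⊆ Ω ∧ HasCompactSupport χ := by
  obtain ⟨R, hR⟩ := hA.isBounded.subset_ball 0
  set s : Set F := Ωᶜ ∪ (Metric.ball (0:F) R)ᶜ with hs
  have hsc : IsClosed s :=
    IsClosed.union (isClosed_compl_iff.2 hΩ) (isClosed_compl_iff.2 Metric.isOpen_ball)
  have hdisj : Disjoint s A := by
    rw [disjoint_comm, Set.disjoint_left]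
    intro q hq
    simp only [hs, Set.mem_union, Set.mem_compl_iff, not_or, not_not]
    exact ⟨hAΩ hq, hR hq⟩
  obtain ⟨f, hf0, hf1, hficc⟩ :=
    exists_contMDiffMap_zero_one_nhds_of_isClosed (𝓘(ℝ, F)) (n := (⊤:ℕ∞)) hsc hA.isClosed hdisj
  obtain ⟨W, hWo, hsW, hfW⟩ := eventually_nhdsSet_iff_exists.mp hf0
  refine ⟨f, ?_, hficc, fun q hq => ?_, ?_, ?_⟩
  · exact (f.contMDiff).contDiff
  · have := hf1.self_of_nhdsSet q hq; simpa using this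
  · have hsupp : Function.support f ⊆ Wᶜ := by
      intro q hq
      simp only [Set.mem_compl_iff]
      intro hqW
      exact hq (hfW q hqW)
    have : tsupport f ⊆ Wᶜ := closure_minimal hsupp (isClosed_compl_iff.2 hWo)
    intro q hq
    have := this hq
    by_contra hqΩ
    exact this (hsW (Or.inl hqΩ))
  · have hsupp : Function.support f ⊆ Metric.ball (0:F) R := by
      intro q hq
      by_contra hqb
      exact hq (hfW q (hsW (Or.inr hqb)))
    have : tsupport f ⊆ Metric.closedBall (0:F) R :=
      closure_minimal (hsupp.trans Metric.ball_subset_closedBall) Metric.isClosed_closedBall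
    exact HasCompactSupport.intro (isCompact_closedBall _ _) fun q hq => by
      by_contra h0
      exact hq (this (subset_closure (Function.mem_support.2 h0)))

variable {X : Type*} [NormedAddCommGroup X] [InnerProductSpace ℝ X] [FiniteDimensional ℝ X]

/-- Main auxiliary lemma: global existence of the Hamilton flow. -/
lemma stmt4_main (p : X → X → ℝ) (px pξ : X → X → X)
    (hsmooth : ContDiffOn ℝ (⊤ : ℕ∞) (fun q : X × X => p q.1 q.2) {q | q.2 ≠ 0})
    (hpx : ∀ x ξ, ξ ≠ 0 → HasGradientAt (fun x' => p x' ξ) (px x ξ) x)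
    (hpξ : ∀ x ξ, ξ ≠ 0 → HasGradientAt (fun ξ' => p x ξ') (pξ x ξ) ξ)
    (hhom : ∀ x (ξ : X), ξ ≠ 0 → ∀ c : ℝ, 0 < c → p x (c • ξ) = c * p x ξ)
    (D : ℝ) (hD : ∀ x ω, ‖ω‖ = 1 → ‖px x ω‖ ≤ D)
    (E : ℝ) (hE : ∀ x ω, ‖ω‖ = 1 → ‖pξ x ω‖ ≤ E) :
    ∀ y η : X, η ≠ 0 →
      ∃ x ξ : ℝ → X, x 0 = y ∧ ξ 0 = η ∧
        (∀ t : ℝ, ξ t ≠ 0 ∧ HasDerivAt x (pξ (x t) (ξ t)) t ∧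
          HasDerivAt ξ (-(px (x t) (ξ t))) t) ∧
        ∀ T > (0 : ℝ), ∃ K : Set (X × X),
          IsCompact K ∧ K ⊆ {q | q.2 ≠ 0} ∧ ∀ t : ℝ, |t| ≤ T → ((x t, ξ t) : X × X) ∈ K := by
  intro y η hη
  have hΩ : IsOpen {q : X × X | q.2 ≠ 0} := isOpen_compl_singleton.preimage continuous_snd
  -- homogeneity of the x-gradient
  have hpxh : ∀ x (ξ : X) (c : ℝ), ξ ≠ 0 → 0 < c → px x (c • ξ) = c • px x ξ := by
    intro x ξ c hξ hc
    have hcs : c • ξ ≠ 0 := smul_ne_zero hc.ne' hξ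
    have h1 := (hpx x (c • ξ) hcs).hasFDerivAt
    have h2 : HasFDerivAt (fun x' => p x' (c • ξ))
        (InnerProductSpace.toDual ℝ X (c • px x ξ)) x := by
      have h3 : HasFDerivAt (fun x' => c * p x' ξ)
          (c • InnerProductSpace.toDual ℝ X (px x ξ)) x :=
        (hpx x ξ hξ).hasFDerivAt.const_mul c
      have h4 : (fun x' => p x' (c • ξ)) = fun x' => c * p x' ξ := by
        funext x'; exact hhom x' ξ hξ c hc
      rw [h4, _root_.map_smul]
      exact h3
    have := h1.unique h2
    exact (InnerProductSpace.toDual ℝ X).injective this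
  -- homogeneity of the ξ-gradient
  have hpξh : ∀ x (ξ : X) (c : ℝ), ξ ≠ 0 → 0 < c → pξ x (c • ξ) = pξ x ξ := by
    intro x ξ c hξ hc
    have hcs : c • ξ ≠ 0 := smul_ne_zero hc.ne' hξ
    have hsm : HasFDerivAt (fun ξ' : X => c • ξ') (c • ContinuousLinearMap.id ℝ X) ξ :=
      (hasFDerivAt_id ξ).const_smul c
    have h1 : HasFDerivAt (fun ξ' => p x (c • ξ'))
        ((InnerProductSpace.toDual ℝ X (pξ x (c • ξ))).comp (c • ContinuousLinearMap.id ℝ X)) ξ :=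
      ((hpξ x (c • ξ) hcs).hasFDerivAt).comp ξ hsm
    have h2 : HasFDerivAt (fun ξ' => c * p x ξ')
        (c • InnerProductSpace.toDual ℝ X (pξ x ξ)) ξ :=
      (hpξ x ξ hξ).hasFDerivAt.const_mul c
    have heq : (fun ξ' => p x (c • ξ')) =ᶠ[nhds ξ] (fun ξ' => c * p x ξ') := by
      filter_upwards [IsOpen.mem_nhds isOpen_compl_singleton hξ] with ξ' hξ'
      exact hhom x ξ' hξ' c hc
    have h1' : HasFDerivAt (fun ξ' => c * p x ξ')
        ((InnerProductSpace.toDual ℝ X (pξ x (c • ξ))).comp (c • ContinuousLinearMap.id ℝ X)) ξ :=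
      h1.congr_of_eventuallyEq heq.symm
    have := h1'.unique h2
    have hL : c • InnerProductSpace.toDual ℝ X (pξ x (c • ξ))
        = c • InnerProductSpace.toDual ℝ X (pξ x ξ) := by
      rw [← this]; ext u
      simp [ContinuousLinearMap.comp_apply]
    have := smul_right_injective (X →L[ℝ] ℝ) hc.ne' hL
    exact (InnerProductSpace.toDual ℝ X).injective this
  -- norm bounds
  have hpxb : ∀ x (ξ : X), ξ ≠ 0 → ‖px x ξ‖ ≤ D * ‖ξ‖ := by
    intro x ξ hξ
    set ω := ‖ξ‖⁻¹ • ξ with hω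
    have h1 : ‖ω‖ = 1 := norm_smul_inv_norm hξ
    have hω0 : ω ≠ 0 := by intro h; rw [h] at h1; simp at h1
    have hξω : ξ = ‖ξ‖ • ω := by
      rw [hω, smul_smul, mul_inv_cancel₀ (norm_ne_zero_iff.2 hξ), one_smul]
    calc ‖px x ξ‖ = ‖px x (‖ξ‖ • ω)‖ := by rw [← hξω]
      _ = ‖ξ‖ * ‖px x ω‖ := by
          rw [hpxh x ω ‖ξ‖ hω0 (norm_pos_iff.2 hξ), norm_smul, norm_norm]
      _ ≤ ‖ξ‖ * D := mul_le_mul_of_nonneg_left (hD x ω h1) (norm_nonneg ξ)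
      _ = D * ‖ξ‖ := mul_comm _ _
  have hpξb : ∀ x (ξ : X), ξ ≠ 0 → ‖pξ x ξ‖ ≤ E := by
    intro x ξ hξ
    set ω := ‖ξ‖⁻¹ • ξ with hω
    have h1 : ‖ω‖ = 1 := norm_smul_inv_norm hξ
    have hω0 : ω ≠ 0 := by intro h; rw [h] at h1; simp at h1
    have hξω : ξ = ‖ξ‖ • ω := by
      rw [hω, smul_smul, mul_inv_cancel₀ (norm_ne_zero_iff.2 hξ), one_smul]
    calc ‖pξ x ξ‖ = ‖pξ x (‖ξ‖ • ω)‖ := by rw [← hξω]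
      _ = ‖pξ x ω‖ := by rw [hpξh x ω ‖ξ‖ hω0 (norm_pos_iff.2 hξ)]
      _ ≤ E := hE x ω h1
  have hD0 : 0 ≤ D := le_trans (norm_nonneg _) (hD y ((‖η‖⁻¹ : ℝ) • η) (norm_smul_inv_norm hη))
  have hE0 : 0 ≤ E := le_trans (norm_nonneg _) (hE y ((‖η‖⁻¹ : ℝ) • η) (norm_smul_inv_norm hη))
  -- smoothness of the Hamilton vector field on Ω
  set v : X × X → X × X := fun q => (pξ q.1 q.2, -(px q.1 q.2)) with hv_def
  set P : X × X → ℝ := fun q => p q.1 q.2 with hP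
  have hPd : ∀ q : X × X, q.2 ≠ 0 → HasFDerivAt P (fderiv ℝ P q) q := by
    intro q hq
    exact ((hsmooth.contDiffAt (hΩ.mem_nhds hq)).differentiableAt (by simp)).hasFDerivAt
  have hfd : ContDiffOn ℝ ((⊤:ℕ∞) : WithTop ℕ∞) (fun q => fderiv ℝ P q) {q : X × X | q.2 ≠ 0} :=
    hsmooth.fderiv_of_isOpen hΩ (by simp)
  have hid1 : ∀ q : X × X, q.2 ≠ 0 → px q.1 q.2 =
      (InnerProductSpace.toDual ℝ X).symm
        ((fderiv ℝ P q).comp (ContinuousLinearMap.inl ℝ X X)) := by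
    intro q hq
    have hmk : HasFDerivAt (fun x' : X => (x', q.2)) (ContinuousLinearMap.inl ℝ X X) q.1 :=
      hasFDerivAt_prodMk_left q.1 q.2
    have h1 : HasFDerivAt (fun x' : X => P (x', q.2))
        ((fderiv ℝ P q).comp (ContinuousLinearMap.inl ℝ X X)) q.1 := by
      have hq' : HasFDerivAt P (fderiv ℝ P q) (q.1, q.2) := by
        rw [Prod.mk.eta]; exact hPd q hq
      exact hq'.comp q.1 hmk
    have h2 := (hpx q.1 q.2 hq).hasFDerivAt
    have h3 : InnerProductSpace.toDual ℝ X (px q.1 q.2)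
        = (fderiv ℝ P q).comp (ContinuousLinearMap.inl ℝ X X) := h2.unique h1
    rw [h3.symm]
    simp
  have hid2 : ∀ q : X × X, q.2 ≠ 0 → pξ q.1 q.2 =
      (InnerProductSpace.toDual ℝ X).symm
        ((fderiv ℝ P q).comp (ContinuousLinearMap.inr ℝ X X)) := by
    intro q hq
    have hmk : HasFDerivAt (fun ξ' : X => (q.1, ξ')) (ContinuousLinearMap.inr ℝ X X) q.2 :=
      hasFDerivAt_prodMk_right q.1 q.2
    have h1 : HasFDerivAt (fun ξ' : X => P (q.1, ξ'))
        ((fderiv ℝ P q).comp (ContinuousLinearMap.inr ℝ X X)) q.2 := by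
      have hq' : HasFDerivAt P (fderiv ℝ P q) (q.1, q.2) := by
        rw [Prod.mk.eta]; exact hPd q hq
      exact hq'.comp q.2 hmk
    have h2 := (hpξ q.1 q.2 hq).hasFDerivAt
    have h3 : InnerProductSpace.toDual ℝ X (pξ q.1 q.2)
        = (fderiv ℝ P q).comp (ContinuousLinearMap.inr ℝ X X) := h2.unique h1
    rw [h3.symm]
    simp
  have hM : ∀ (ι : X →L[ℝ] X × X), ∃ M : ((X × X) →L[ℝ] ℝ) →L[ℝ] X,
      ∀ L : (X × X) →L[ℝ] ℝ, M L = (InnerProductSpace.toDual ℝ X).symm (L.comp ι) := by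
    intro ι
    refine ⟨((InnerProductSpace.toDual ℝ X).symm.toContinuousLinearEquiv :
        ((X →L[ℝ] ℝ) ≃L[ℝ] X)).toContinuousLinearMap.comp
        ((ContinuousLinearMap.compL ℝ X (X × X) ℝ).flip ι), fun L => rfl⟩
  obtain ⟨M₁, hM₁⟩ := hM (ContinuousLinearMap.inl ℝ X X)
  obtain ⟨M₂, hM₂⟩ := hM (ContinuousLinearMap.inr ℝ X X)
  have hpxs : ContDiffOn ℝ 1 (fun q : X × X => px q.1 q.2) {q : X × X | q.2 ≠ 0} := by
    have h1 : ContDiffOn ℝ 1 (fun q : X × X => M₁ (fderiv ℝ P q)) {q : X × X | q.2 ≠ 0} :=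
      M₁.contDiff.comp_contDiffOn (hfd.of_le (by exact_mod_cast le_top))
    exact h1.congr fun q hq => by rw [hM₁, ← hid1 q hq]
  have hpξs : ContDiffOn ℝ 1 (fun q : X × X => pξ q.1 q.2) {q : X × X | q.2 ≠ 0} := by
    have h1 : ContDiffOn ℝ 1 (fun q : X × X => M₂ (fderiv ℝ P q)) {q : X × X | q.2 ≠ 0} :=
      M₂.contDiff.comp_contDiffOn (hfd.of_le (by exact_mod_cast le_top))
    exact h1.congr fun q hq => by rw [hM₂, ← hid2 q hq]
  have hv : ContDiffOn ℝ 1 v {q : X × X | q.2 ≠ 0} := hpξs.prodMk hpxs.neg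
  -- Part 3: cutoffs, Picard-Lindelöf solutions, gluing
  classical
  set r : ℝ := ‖η‖ with hr_def
  have hr : 0 < r := norm_pos_iff.2 hη
  set Tm : ℕ → ℝ := fun m => (m : ℝ) + 2 with hTm
  have hTmpos : ∀ m, 0 < Tm m := fun m => by positivity
  set Aset : ℝ → Set (X × X) := fun S =>
    {q | ‖q.1 - y‖ ≤ E * S ∧ r * Real.exp (-(D * S)) ≤ ‖q.2‖ ∧ ‖q.2‖ ≤ r * Real.exp (D * S)}
    with hAset
  have hAclosed : ∀ S, IsClosed (Aset S) := by
    intro S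
    simp only [hAset, Set.setOf_and]
    refine IsClosed.inter ?_ (IsClosed.inter ?_ ?_)
    · exact isClosed_le ((continuous_fst.sub continuous_const).norm) continuous_const
    · exact isClosed_le continuous_const continuous_snd.norm
    · exact isClosed_le continuous_snd.norm continuous_const
  have hAbdd : ∀ S, 0 ≤ S → Bornology.IsBounded (Aset S) := by
    intro S hS
    apply Bornology.IsBounded.subset
      (Metric.isBounded_closedBall (x := (0 : X × X))
        (r := (‖y‖ + E * S) + r * Real.exp (D * S)))
    intro q hq
    rw [Metric.mem_closedBall, dist_zero_right]
    have h1 : ‖q.1‖ ≤ ‖y‖ + E * S := by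
      have := norm_add_le (q.1 - y) y
      rw [sub_add_cancel] at this
      have h2 := hq.1
      linarith
    have h2 : ‖q.2‖ ≤ r * Real.exp (D * S) := hq.2.2
    have hES : 0 ≤ E * S := mul_nonneg hE0 hS
    have hre : 0 ≤ r * Real.exp (D * S) := by positivity
    have hnq : ‖q‖ = max ‖q.1‖ ‖q.2‖ := rfl
    rw [hnq]
    apply max_le
    · have : (0:ℝ) ≤ ‖y‖ := norm_nonneg y
      linarith
    · have : (0:ℝ) ≤ ‖y‖ := norm_nonneg y
      linarith
  have hAcomp : ∀ S, 0 ≤ S → IsCompact (Aset S) :=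
    fun S hS => Metric.isCompact_of_isClosed_isBounded (hAclosed S) (hAbdd S hS)
  have hAΩ : ∀ S, Aset S ⊆ {q : X × X | q.2 ≠ 0} := by
    intro S q hq
    have h1 := hq.2.1
    have hpos : 0 < r * Real.exp (-(D * S)) := by positivity
    intro h0
    rw [h0] at h1
    simp only [norm_zero] at h1
    linarith
  have hAmono : ∀ S S', 0 ≤ S → S ≤ S' → Aset S ⊆ Aset S' := by
    intro S S' hS hSS q hq
    refine ⟨hq.1.trans (mul_le_mul_of_nonneg_left hSS hE0), le_trans ?_ hq.2.1, hq.2.2.trans ?_⟩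
    · apply mul_le_mul_of_nonneg_left _ hr.le
      apply Real.exp_le_exp.2
      have := mul_le_mul_of_nonneg_left hSS hD0
      linarith
    · exact mul_le_mul_of_nonneg_left
        (Real.exp_le_exp.2 (mul_le_mul_of_nonneg_left hSS hD0)) hr.le
  -- cutoffs
  have hcut : ∀ m : ℕ, ∃ χ : X × X → ℝ, ContDiff ℝ ((⊤:ℕ∞) : WithTop ℕ∞) χ ∧
      (∀ q, χ q ∈ Icc (0:ℝ) 1) ∧ EqOn χ 1 (Aset (Tm m)) ∧
      tsupport χ ⊆ {q : X × X | q.2 ≠ 0} ∧ HasCompactSupport χ :=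
    fun m => stmt4_exists_cutoff (hAcomp _ (hTmpos m).le) hΩ (hAΩ _)
  choose χ hχsm hχ01 hχ1 hχsupp hχcs using hcut
  set w : ℕ → X × X → X × X := fun m q => χ m q • v q with hw
  have hχ0 : ∀ m q, (q : X × X).2 = 0 → χ m q = 0 := by
    intro m q hq
    apply image_eq_zero_of_notMem_tsupport
    intro hmem
    exact (hχsupp m hmem) hq
  have hχabs : ∀ m q, ‖χ m q‖ ≤ 1 := by
    intro m q
    rw [Real.norm_eq_abs, abs_le]
    exact ⟨by linarith [(hχ01 m q).1], (hχ01 m q).2⟩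
  have hwx : ∀ m q, ‖(w m q).1‖ ≤ E := by
    intro m q
    by_cases hq : q.2 = 0
    · simp only [hw, hχ0 m q hq, zero_smul]
      simpa using hE0
    · have h1 : (w m q).1 = χ m q • pξ q.1 q.2 := by simp [hw, hv_def]
      rw [h1, norm_smul]
      calc ‖χ m q‖ * ‖pξ q.1 q.2‖ ≤ 1 * E :=
            mul_le_mul (hχabs m q) (hpξb q.1 q.2 hq) (norm_nonneg _) one_pos.le
        _ = E := one_mul E
  have hwξ : ∀ m q, ‖(w m q).2‖ ≤ D * ‖q.2‖ := by
    intro m q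
    by_cases hq : q.2 = 0
    · simp only [hw, hχ0 m q hq, zero_smul]
      simp [hq]
    · have h1 : (w m q).2 = χ m q • (-(px q.1 q.2)) := by simp [hw, hv_def]
      rw [h1, norm_smul, norm_neg]
      calc ‖χ m q‖ * ‖px q.1 q.2‖ ≤ 1 * (D * ‖q.2‖) :=
            mul_le_mul (hχabs m q) (hpxb q.1 q.2 hq) (norm_nonneg _) one_pos.le
        _ = D * ‖q.2‖ := one_mul _
  have hwsm : ∀ m, ContDiff ℝ 1 (w m) := by
    intro m
    rw [contDiff_iff_contDiffAt]
    intro q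
    by_cases hq : q.2 ≠ 0
    · exact (((hχsm m).of_le (by exact_mod_cast le_top)).contDiffAt).smul
        (hv.contDiffAt (hΩ.mem_nhds hq))
    · push_neg at hq
      have hnot : q ∉ tsupport (χ m) := fun hmem => (hχsupp m hmem) hq
      have hev : w m =ᶠ[nhds q] (fun _ => (0 : X × X)) := by
        filter_upwards [((isClosed_tsupport (χ m)).isOpen_compl).mem_nhds hnot] with q' hq'
        simp [hw, image_eq_zero_of_notMem_tsupport hq']
      exact (contDiffAt_const (c := (0 : X × X))).congr_of_eventuallyEq hev
  have hwcs : ∀ m, HasCompactSupport (w m) := by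
    intro m
    apply HasCompactSupport.intro (hχcs m).isCompact
    intro q hq
    simp [hw, image_eq_zero_of_notMem_tsupport hq]
  have hlip : ∀ m, ∃ L : NNReal, LipschitzWith L (w m) :=
    fun m => ContDiff.lipschitzWith_of_hasCompactSupport (hwcs m) (hwsm m) one_ne_zero
  choose LL hLL using hlip
  -- solutions on each interval
  have hexm : ∀ m : ℕ, ∃ f : ℝ → X × X, f 0 = (y, η) ∧
      ∀ t ∈ Ioo (-(Tm m)) (Tm m), HasDerivAt f (w m (f t)) t := by
    intro m
    obtain ⟨C, hC⟩ := Continuous.bounded_above_of_compact_support ((hwsm m).continuous) (hwcs m)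
    have hC0 : 0 ≤ C := le_trans (norm_nonneg _) (hC (y, η))
    have hT := hTmpos m
    have hpl : IsPicardLindelof (fun _ q => w m q) (tmin := -(Tm m)) (tmax := Tm m)
        ⟨0, by linarith, by linarith⟩ (y, η) ⟨C * Tm m, by positivity⟩ 0 ⟨C, hC0⟩ (LL m) :=
      { lipschitzOnWith := fun t _ => (hLL m).lipschitzOnWith
        continuousOn := fun q _ => continuousOn_const
        norm_le := fun t _ q _ => hC q
        mul_max_le := by
          show C * max (Tm m - 0) (0 - -(Tm m)) ≤ C * Tm m - 0
          rw [sub_zero, zero_sub, neg_neg, max_self, sub_zero] }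
    obtain ⟨f, hf0, hfd2⟩ := hpl.exists_eq_forall_mem_Icc_hasDerivWithinAt₀
    exact ⟨f, hf0, fun t ht =>
      (hfd2 t (Ioo_subset_Icc_self ht)).hasDerivAt (Icc_mem_nhds ht.1 ht.2)⟩
  choose FF hFF0 hFFd using hexm
  -- a priori bounds
  have hbnd : ∀ m (t : ℝ), |t| < Tm m →
      ‖(FF m t).1 - y‖ ≤ E * |t| ∧ r * Real.exp (-(D * |t|)) ≤ ‖(FF m t).2‖ ∧
        ‖(FF m t).2‖ ≤ r * Real.exp (D * |t|) := by
    intro m t ht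
    have hsub : Icc (-|t|) |t| ⊆ Ioo (-(Tm m)) (Tm m) := fun s hs =>
      ⟨lt_of_lt_of_le (neg_lt_neg ht) hs.1, lt_of_le_of_lt hs.2 ht⟩
    have hx : ∀ s ∈ Icc (-|t|) |t|, HasDerivAt (fun u => (FF m u).1) ((w m (FF m s)).1) s :=
      fun s hs =>
        ((ContinuousLinearMap.fst ℝ X X).hasFDerivAt).comp_hasDerivAt s (hFFd m s (hsub hs))
    have hξ2 : ∀ s ∈ Icc (-|t|) |t|, HasDerivAt (fun u => (FF m u).2) ((w m (FF m s)).2) s :=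
      fun s hs =>
        ((ContinuousLinearMap.snd ℝ X X).hasFDerivAt).comp_hasDerivAt s (hFFd m s (hsub hs))
    have h1 := stmt4_gron_lin hx (fun s _ => hwx m (FF m s))
    have h2 := stmt4_gron_two_sided hξ2 (fun s _ => hwξ m (FF m s))
    simp only [hFF0 m] at h1 h2
    exact ⟨by simpa using h1, by simpa using h2.1, by simpa using h2.2⟩
  have hmem : ∀ m (t : ℝ), |t| < Tm m → FF m t ∈ Aset (Tm m) := by
    intro m t ht
    obtain ⟨h1, h2, h3⟩ := hbnd m t ht
    refine ⟨h1.trans (mul_le_mul_of_nonneg_left ht.le hE0), le_trans ?_ h2, h3.trans ?_⟩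
    · apply mul_le_mul_of_nonneg_left _ hr.le
      apply Real.exp_le_exp.2
      have := mul_le_mul_of_nonneg_left ht.le hD0
      linarith
    · exact mul_le_mul_of_nonneg_left
        (Real.exp_le_exp.2 (mul_le_mul_of_nonneg_left ht.le hD0)) hr.le
  have hw_eqA : ∀ m q, q ∈ Aset (Tm m) → w m q = v q := by
    intro m q hq
    have := hχ1 m hq
    simp only [hw, this, Pi.one_apply, one_smul]
  have hTmono : ∀ {m k : ℕ}, m ≤ k → Tm m ≤ Tm k := by
    intro m k h
    simp only [hTm]
    have : (m:ℝ) ≤ (k:ℝ) := by exact_mod_cast h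
    linarith
  -- consistency of the solutions
  have hcons : ∀ m k : ℕ, m ≤ k → ∀ t ∈ Ioo (-(Tm m)) (Tm m), FF m t = FF k t := by
    intro m k hmk
    have h0 : (0:ℝ) ∈ Ioo (-(Tm m)) (Tm m) := ⟨by linarith [hTmpos m], hTmpos m⟩
    have heqon : EqOn (FF m) (FF k) (Ioo (-(Tm m)) (Tm m)) := by
      apply ODE_solution_unique_of_mem_Ioo (v := fun _ q => w k q) (s := fun _ => univ)
        (fun _ _ => (hLL k).lipschitzOnWith) h0 ?_ ?_ ?_
      · intro t ht
        refine ⟨?_, trivial⟩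
        have habs : |t| < Tm m := abs_lt.2 ⟨ht.1, ht.2⟩
        have h1 := hFFd m t ht
        rw [hw_eqA m _ (hmem m t habs)] at h1
        show HasDerivAt (FF m) (w k (FF m t)) t
        rw [hw_eqA k _ (hAmono _ _ (hTmpos m).le (hTmono hmk) (hmem m t habs))]
        exact h1
      · intro t ht
        exact ⟨hFFd k t (Ioo_subset_Ioo (neg_le_neg (hTmono hmk)) (hTmono hmk) ht), trivial⟩
      · rw [hFF0 m, hFF0 k]
    exact fun t ht => heqon ht
  -- glue the solutions
  set f : ℝ → X × X := fun t => FF ⌊|t|⌋₊ t with hf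
  have hfloor : ∀ t : ℝ, |t| < Tm ⌊|t|⌋₊ := by
    intro t
    have := Nat.lt_floor_add_one |t|
    simp only [hTm]
    linarith
  have hagree : ∀ (k : ℕ) (t : ℝ), |t| < Tm k → f t = FF k t := by
    intro k t ht
    rcases le_total ⌊|t|⌋₊ k with h | h
    · exact hcons _ _ h t ⟨(abs_lt.mp (hfloor t)).1, (abs_lt.mp (hfloor t)).2⟩
    · exact (hcons _ _ h t ⟨(abs_lt.mp ht).1, (abs_lt.mp ht).2⟩).symm
  have hfbnd : ∀ t : ℝ, ‖(f t).1 - y‖ ≤ E * |t| ∧ r * Real.exp (-(D * |t|)) ≤ ‖(f t).2‖ ∧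
      ‖(f t).2‖ ≤ r * Real.exp (D * |t|) := fun t => hbnd _ t (hfloor t)
  have hfderiv : ∀ t : ℝ, HasDerivAt f (v (f t)) t := by
    intro t
    have hm := hfloor t
    have h1 := hFFd ⌊|t|⌋₊ t ⟨(abs_lt.mp hm).1, (abs_lt.mp hm).2⟩
    rw [hw_eqA _ _ (hmem _ t hm)] at h1
    have hev : f =ᶠ[nhds t] FF ⌊|t|⌋₊ := by
      have hU : IsOpen {s : ℝ | |s| < |t| + 1} := isOpen_lt continuous_abs continuous_const
      filter_upwards [hU.mem_nhds (show |t| < |t| + 1 by linarith)] with s hs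
      apply hagree
      have h2 : |t| < (⌊|t|⌋₊ : ℝ) + 1 := Nat.lt_floor_add_one |t|
      have hs' : |s| < |t| + 1 := hs
      simp only [hTm]
      linarith
    exact h1.congr_of_eventuallyEq hev
  -- final assembly
  refine ⟨fun t => (f t).1, fun t => (f t).2, ?_, ?_, ?_, ?_⟩
  · show (f 0).1 = y
    have h0 : f 0 = FF 0 0 := hagree 0 0 (by simpa using hTmpos 0)
    rw [h0, hFF0 0]
  · show (f 0).2 = η
    have h0 : f 0 = FF 0 0 := hagree 0 0 (by simpa using hTmpos 0)
    rw [h0, hFF0 0]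
  · intro t
    have hξne : (f t).2 ≠ 0 := by
      have h2 := (hfbnd t).2.1
      have hpos : 0 < r * Real.exp (-(D * |t|)) := by positivity
      intro h0
      rw [h0] at h2
      simp only [norm_zero] at h2
      linarith
    refine ⟨hξne, ?_, ?_⟩
    · have := ((ContinuousLinearMap.fst ℝ X X).hasFDerivAt).comp_hasDerivAt t (hfderiv t)
      simpa [hv_def, Function.comp_def] using this
    · have := ((ContinuousLinearMap.snd ℝ X X).hasFDerivAt).comp_hasDerivAt t (hfderiv t)
      simpa [hv_def, Function.comp_def] using this
  · intro T hT
    refine ⟨Aset T, hAcomp T hT.le, hAΩ T, ?_⟩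
    intro t ht
    have hmem2 : f t ∈ Aset T := by
      obtain ⟨h1, h2, h3⟩ := hfbnd t
      refine ⟨h1.trans (mul_le_mul_of_nonneg_left ht hE0), le_trans ?_ h2, h3.trans ?_⟩
      · apply mul_le_mul_of_nonneg_left _ hr.le
        apply Real.exp_le_exp.2
        have := mul_le_mul_of_nonneg_left ht hD0
        linarith
      · exact mul_le_mul_of_nonneg_left
          (Real.exp_le_exp.2 (mul_le_mul_of_nonneg_left ht hD0)) hr.le
    simpa using hmem2
end helpers

/-- Global existence of the Hamilton flow: for a smooth symbol `p(x,ξ)`, positively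
homogeneous of degree 1 in `ξ`, with `d_x p` and `d_ξ p` bounded on `{|ω| = 1}`,
every solution of the Hamilton equations with initial condition `(y,η)`, `η ≠ 0`,
exists for all time; moreover on any bounded time interval the trajectory stays in a
compact subset of `ℝⁿ × (ℝⁿ ∖ {0})`. -/
theorem stmt_4 (n : ℕ) (p : EuclideanSpace ℝ (Fin n) → EuclideanSpace ℝ (Fin n) → ℝ)
    (px pξ : EuclideanSpace ℝ (Fin n) → EuclideanSpace ℝ (Fin n) → EuclideanSpace ℝ (Fin n))
    (hsmooth : ContDiffOn ℝ (⊤ : ℕ∞)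
      (fun q : EuclideanSpace ℝ (Fin n) × EuclideanSpace ℝ (Fin n) => p q.1 q.2)
      {q | q.2 ≠ 0})
    (hpx : ∀ x ξ, ξ ≠ 0 → HasGradientAt (fun x' => p x' ξ) (px x ξ) x)
    (hpξ : ∀ x ξ, ξ ≠ 0 → HasGradientAt (fun ξ' => p x ξ') (pξ x ξ) ξ)
    (hhom : ∀ x (ξ : EuclideanSpace ℝ (Fin n)), ξ ≠ 0 → ∀ c : ℝ, 0 < c →
      p x (c • ξ) = c * p x ξ)
    (D : ℝ) (hD : ∀ x ω, ‖ω‖ = 1 → ‖px x ω‖ ≤ D)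
    (E : ℝ) (hE : ∀ x ω, ‖ω‖ = 1 → ‖pξ x ω‖ ≤ E) :
    ∀ y η : EuclideanSpace ℝ (Fin n), η ≠ 0 →
      ∃ x ξ : ℝ → EuclideanSpace ℝ (Fin n), x 0 = y ∧ ξ 0 = η ∧
        (∀ t : ℝ, ξ t ≠ 0 ∧ HasDerivAt x (pξ (x t) (ξ t)) t ∧
          HasDerivAt ξ (-(px (x t) (ξ t))) t) ∧
        ∀ T > (0 : ℝ), ∃ K : Set (EuclideanSpace ℝ (Fin n) × EuclideanSpace ℝ (Fin n)),
          IsCompact K ∧ K ⊆ {q | q.2 ≠ 0} ∧ ∀ t : ℝ, |t| ≤ T → (x t, ξ t) ∈ K := by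
  exact stmt4_main p px pξ hsmooth hpx hpξ hhom D hD E hE
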